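/- Let β, γ ∈ ℝ, b > 0, let Π : [0,b) → ℝ be a Poincaré half-map datum, and let B, α, δ ∈ ℝ with B > δ > 0 be such that X^sl(u) > 0 for all u ∈ [Π(x), x] and all x ∈ [0,b). Define Ĩ(x) = ∫_{Π(x)}^{x} u/X^sl(u) du. Then for every x ∈ (0,b): Ĩ'(x) = x·(x − Π(x)) · (αβ·x·Π(x) + β(B−δ)·(x + Π(x)) − α − γ(B−δ)) / ((1+δ)·X^sl(x)·X^sl(Π(x))·V(x)). -/

import Mathlib

/-!
Differentiating `Ĩ(x) = ∫_{Π x}^{x} u / X^sl(u) du` by the Leibniz rule gives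
`x / X^sl(x) - Π(x) Π'(x) / X^sl(Π x)`. Differentiating the identity `∫_{Π x}^{x} u / V(u) du = 0`
in the same way yields `Π'(x) = x V(Π x) / (Π(x) V(x))`. After substitution the numerator is
`X^sl(Π x) V(x) - X^sl(x) V(Π x)`, a polynomial vanishing on the diagonal, hence divisible by
`x - Π(x)`.
-/

open Set intervalIntegral
open scoped Interval Topology

/-- `V(x) = βx² − γx + 1`. -/
def Vq (β γ x : ℝ) : ℝ := β * x ^ 2 - γ * x + 1

/-- The sliding vector field `X^sl(x) = (B − δ + αx)/(1 + δ)`. -/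
noncomputable def Xsl (B α δ x : ℝ) : ℝ := (B - δ + α * x) / (1 + δ)

/-- The slow divergence integral (up to a positive constant)
`Ĩ(x) = ∫_{P x}^{x} u / X^sl(u) du`. -/
noncomputable def Itil (B α δ : ℝ) (P : ℝ → ℝ) (x : ℝ) : ℝ :=
  ∫ u in (P x)..x, u / Xsl B α δ u

theorem hasDerivAt_integral_of_continuousOn {E : Type*} [NormedAddCommGroup E]
    [NormedSpace ℝ E] [CompleteSpace E] {f : ℝ → E} {a b : ℝ → ℝ} {U : Set ℝ} {a' b' x₀ : ℝ}
    (hU : IsOpen U) (hf : ContinuousOn f U) (hab : [[a x₀, b x₀]] ⊆ U)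
    (ha : HasDerivAt a a' x₀) (hb : HasDerivAt b b' x₀) :
    HasDerivAt (fun x => ∫ u in a x..b x, f u) (b' • f (b x₀) - a' • f (a x₀)) x₀ := by
  have haU : a x₀ ∈ U := hab left_mem_uIcc
  have hbU : b x₀ ∈ U := hab right_mem_uIcc
  have hF := integral_hasFDerivAt ((hf.mono hab).intervalIntegrable)
    (hf.stronglyMeasurableAtFilter hU _ haU) (hf.stronglyMeasurableAtFilter hU _ hbU)
    (hf.continuousAt (hU.mem_nhds haU)) (hf.continuousAt (hU.mem_nhds hbU))
  simpa [Function.comp_def] using hF.comp_hasDerivAt x₀ (ha.prodMk hb)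

theorem hasDerivAt_integral_id_div {g P : ℝ → ℝ} {x₀ p' : ℝ} (hg : Continuous g)
    (hgP : [[P x₀, x₀]] ⊆ g ⁻¹' {0}ᶜ) (hP : HasDerivAt P p' x₀) :
    HasDerivAt (fun x => ∫ u in P x..x, u / g u) (x₀ / g x₀ - P x₀ / g (P x₀) * p') x₀ := by
  have hf : ContinuousOn (fun u => u / g u) (g ⁻¹' {0}ᶜ) :=
    continuousOn_id.div hg.continuousOn fun _ hu => hu
  simpa [mul_comm] using hasDerivAt_integral_of_continuousOn
    (isOpen_compl_singleton.preimage hg) hf hgP hP (hasDerivAt_id x₀)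

theorem continuous_Vq (β γ : ℝ) : Continuous (Vq β γ) := by
  unfold Vq; fun_prop

theorem continuous_Xsl (B α δ : ℝ) : Continuous (Xsl B α δ) := by
  unfold Xsl; fun_prop

theorem div_Xsl_sub_eq {B α δ β γ x y : ℝ} (hy : y ≠ 0) (hXx : Xsl B α δ x ≠ 0)
    (hXy : Xsl B α δ y ≠ 0) (hVx : Vq β γ x ≠ 0) :
    x / Xsl B α δ x - y / Xsl B α δ y * (x * Vq β γ y / (y * Vq β γ x)) =
      x * (x - y) * (α * β * x * y + β * (B - δ) * (x + y) - α - γ * (B - δ)) /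
        ((1 + δ) * Xsl B α δ x * Xsl B α δ y * Vq β γ x) := by
  have hδ : 1 + δ ≠ 0 := by
    rintro hδ
    simp [Xsl, hδ] at hXx
  field_simp
  unfold Xsl Vq
  field_simp
  ring

theorem slow_divergence_integral_derivative_general (β γ b B α δ : ℝ)
    (P : ℝ → ℝ)
    (hdiff : DifferentiableOn ℝ P (Set.Ico 0 b))
    (hPneg : ∀ x ∈ Set.Ioo 0 b, P x < 0)
    (hV : ∀ x ∈ Set.Ioo 0 b, ∀ u ∈ Set.Icc (P x) x, Vq β γ u > 0)
    (hint : ∀ x ∈ Set.Ioo 0 b, ∫ u in (P x)..x, u / Vq β γ u = 0)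
    (hXsl : ∀ x ∈ Set.Ico 0 b, ∀ u ∈ Set.Icc (P x) x, Xsl B α δ u > 0) :
    ∀ x ∈ Set.Ioo 0 b,
      deriv (Itil B α δ P) x =
        x * (x - P x) *
          (α * β * x * P x + β * (B - δ) * (x + P x) - α - γ * (B - δ)) /
          ((1 + δ) * Xsl B α δ x * Xsl B α δ (P x) * Vq β γ x) := by
  intro x hx
  have hPx : P x < 0 := hPneg x hx
  have hIcc : [[P x, x]] = Icc (P x) x := uIcc_of_le (by linarith [hx.1])
  have hP : HasDerivAt P (deriv P x) x :=
    (hdiff.differentiableAt (Ico_mem_nhds hx.1 hx.2)).hasDerivAt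
  have hVpos : [[P x, x]] ⊆ Vq β γ ⁻¹' {0}ᶜ := fun u hu => (hV x hx u (hIcc ▸ hu)).ne'
  have hXpos : [[P x, x]] ⊆ Xsl B α δ ⁻¹' {0}ᶜ :=
    fun u hu => (hXsl x (Ioo_subset_Ico_self hx) u (hIcc ▸ hu)).ne'
  have hVrel : x / Vq β γ x - P x / Vq β γ (P x) * deriv P x = 0 := by
    have hconst : (fun y => ∫ u in P y..y, u / Vq β γ u) =ᶠ[𝓝 x] fun _ => 0 :=
      Filter.eventually_of_mem (isOpen_Ioo.mem_nhds hx) hint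
    rw [← (hasDerivAt_integral_id_div (continuous_Vq β γ) hVpos hP).deriv, hconst.deriv_eq,
      deriv_const]
  have hVx : Vq β γ x ≠ 0 := hVpos right_mem_uIcc
  have hVPx : Vq β γ (P x) ≠ 0 := hVpos left_mem_uIcc
  have hp' : deriv P x = x * Vq β γ (P x) / (P x * Vq β γ x) := by
    rw [eq_div_iff (mul_ne_zero hPx.ne hVx)]
    field_simp at hVrel
    linear_combination -hVrel
  unfold Itil
  rw [(hasDerivAt_integral_id_div (continuous_Xsl B α δ) hXpos hP).deriv, hp']
  exact div_Xsl_sub_eq hPx.ne (hXpos right_mem_uIcc) (hXpos left_mem_uIcc) hVx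

/-- Equation (3.1): the derivative of the slow divergence integral `Ĩ` along a
Poincaré half-map datum `P` on `[0,b)`. -/
theorem slow_divergence_integral_derivative (β γ b B α δ : ℝ)
    (hb : 0 < b) (hBδ : B > δ) (hδ : δ > 0) (P : ℝ → ℝ)
    (hdiff : DifferentiableOn ℝ P (Set.Ico 0 b))
    (hP0 : P 0 = 0)
    (hPneg : ∀ x ∈ Set.Ioo 0 b, P x < 0)
    (hV : ∀ x ∈ Set.Ioo 0 b, ∀ u ∈ Set.Icc (P x) x, Vq β γ u > 0)
    (hint : ∀ x ∈ Set.Ioo 0 b, ∫ u in (P x)..x, u / Vq β γ u = 0)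
    (hXsl : ∀ x ∈ Set.Ico 0 b, ∀ u ∈ Set.Icc (P x) x, Xsl B α δ u > 0) :
    ∀ x ∈ Set.Ioo 0 b,
      deriv (Itil B α δ P) x =
        x * (x - P x) *
          (α * β * x * P x + β * (B - δ) * (x + P x) - α - γ * (B - δ)) /
          ((1 + δ) * Xsl B α δ x * Xsl B α δ (P x) * Vq β γ x) :=
  slow_divergence_integral_derivative_general β γ b B α δ P hdiff hPneg hV hint hXsl
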